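/- arXiv:0907.2545 — 2 statements merged into one kernel-verified Lean document; each statement's English description precedes it below -/
import Mathlib

section
/- Let P(z) = Σ_{j=0}^m z^j A_j be a matrix polynomial with coefficients A_j ∈ ℂ^{n×n} such that every coefficient satisfies A_jᵀ = A_j or A_jᵀ = −A_j. Let λ ∈ ℂ and x ∈ ℂⁿ with x^H x = 1, and set r := −P(λ)x and Λ_m := (1, λ, …, λ^m)ᵀ ∈ ℂ^{m+1}. For each j define ΔA_j := −x̄ xᵀ A_j x x^H + (conj(λ^j)/‖Λ_m‖₂²)·(x̄ rᵀ + r x^H − 2 (rᵀx) x̄ x^H) if A_jᵀ = A_j, and ΔA_j := −(conj(λ^j)/‖Λ_m‖₂²)·(x̄ rᵀ − r x^H) if A_jᵀ = −A_j. Then the polynomial ΔP(z) := Σ_{j=0}^m z^j ΔA_j satisfies P(λ)x + ΔP(λ)x = 0, and moreover ΔA_jᵀ = ΔA_j whenever A_jᵀ = A_j and ΔA_jᵀ = −ΔA_j whenever A_jᵀ = −A_j (so if P is symmetric, skew-symmetric, T-even or T-odd, then ΔP has the same structure). -/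
/-! Because `x^H x = 1`, the dyads `x̄ rᵀ` and `r x^H` map `x` to `(rᵀx) x̄` and `r`. Hence in
both cases `ΔA_j x = −(xᵀA_j x) x̄ + (conj(λ^j)/‖Λ_m‖²)(r − (rᵀx) x̄)`: for skew `A_j` the first
term is missing from `ΔA_j` but is zero anyway, as `xᵀA_j x = 0`. Summing with weights `λ^j`, the
first terms give `−(xᵀP(λ)x) x̄ = (rᵀx) x̄` and the coefficients `λ^j conj(λ^j)/‖Λ_m‖²` sum to 1,
so `ΔP(λ)x = r = −P(λ)x`. Transposition swaps the two dyads, which gives the structure. -/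

open scoped ComplexConjugate
open Matrix

noncomputable section

variable {ι : Type*} [Fintype ι] [DecidableEq ι]

/-- Evaluation of the matrix polynomial with coefficient list `A` at the point `z`. -/
def polyEval {m : ℕ} (A : Fin (m+1) → Matrix ι ι ℂ) (z : ℂ) : Matrix ι ι ℂ :=
  ∑ j : Fin (m+1), z ^ (j : ℕ) • A j

/-- Squared Euclidean norm of a complex vector. -/
def vecNormSq (x : ι → ℂ) : ℝ := ∑ i, ‖x i‖ ^ 2

/-- Euclidean norm of a complex vector. -/
def vecNorm (x : ι → ℂ) : ℝ := Real.sqrt (vecNormSq x)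

/-- `‖(1, z, …, z^m)‖₂²`. -/
def lamNormSq (m : ℕ) (z : ℂ) : ℝ := ∑ j : Fin (m+1), ‖z ^ (j : ℕ)‖ ^ 2

/-- Squared Frobenius norm of a matrix. -/
def frobNormSq (M : Matrix ι ι ℂ) : ℝ := ∑ i, ∑ k, ‖M i k‖ ^ 2

/-- Spectral (operator 2-) norm of a matrix. -/
def specNorm (M : Matrix ι ι ℂ) : ℝ := ‖Matrix.toEuclideanCLM (𝕜 := ℂ) M‖

/-- Frobenius norm of a matrix polynomial: `(Σ_j ‖A_j‖_F²)^{1/2}`. -/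
def polyNormF {m : ℕ} (A : Fin (m+1) → Matrix ι ι ℂ) : ℝ :=
  Real.sqrt (∑ j, frobNormSq (A j))

/-- Spectral norm of a matrix polynomial: `(Σ_j ‖A_j‖₂²)^{1/2}`. -/
def polyNorm2 {m : ℕ} (A : Fin (m+1) → Matrix ι ι ℂ) : ℝ :=
  Real.sqrt (∑ j, specNorm (A j) ^ 2)

/-- Structured backward error of `(lam, x)` as an approximate eigenpair of the matrix
polynomial `A`, with respect to the polynomial norm `N` and the structure class `S`. -/
def eta {m : ℕ} (N : (Fin (m+1) → Matrix ι ι ℂ) → ℝ)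
    (S : Set (Fin (m+1) → Matrix ι ι ℂ)) (lam : ℂ) (x : ι → ℂ)
    (A : Fin (m+1) → Matrix ι ι ℂ) : ℝ :=
  sInf {t | ∃ ΔA ∈ S, (polyEval A lam + polyEval ΔA lam) *ᵥ x = 0 ∧ t = N ΔA}

/-- A matrix polynomial is regular if `det P(z) ≠ 0` for some `z`. -/
def Regular {m : ℕ} (A : Fin (m+1) → Matrix ι ι ℂ) : Prop :=
  ∃ z : ℂ, (polyEval A z).det ≠ 0

theorem lamNormSq_pos (m : ℕ) (z : ℂ) : 0 < lamNormSq m z :=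
  Finset.sum_pos' (fun _ _ => by positivity) ⟨0, Finset.mem_univ _, by simp⟩

theorem sum_pow_mul_conj_div_lamNormSq (m : ℕ) (z : ℂ) :
    ∑ j : Fin (m+1), z ^ (j : ℕ) * (conj (z ^ (j : ℕ)) / (lamNormSq m z : ℂ)) = 1 := by
  have hL : (lamNormSq m z : ℂ) ≠ 0 := mod_cast (lamNormSq_pos m z).ne'
  simp_rw [mul_div_assoc', Complex.mul_conj', ← Finset.sum_div, div_eq_one_iff_eq hL,
    lamNormSq]
  push_cast
  rfl

section PolyEval

variable {κ : Type*} [Fintype κ] {m : ℕ}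

theorem polyEval_mulVec (A : Fin (m+1) → Matrix κ κ ℂ) (z : ℂ) (x : κ → ℂ) :
    polyEval A z *ᵥ x = ∑ j : Fin (m+1), z ^ (j : ℕ) • (A j *ᵥ x) := by
  simp only [polyEval, sum_mulVec, smul_mulVec]

theorem polyEval_mulVec_eq_of_coeff_mulVec {A ΔA : Fin (m+1) → Matrix κ κ ℂ}
    {x y v : κ → ℂ} {c : Fin (m+1) → ℂ}
    (h : ∀ j, ΔA j *ᵥ x = -(x ⬝ᵥ (A j *ᵥ x)) • y + c j • v) (z : ℂ) :
    polyEval ΔA z *ᵥ x =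
      -(x ⬝ᵥ (polyEval A z *ᵥ x)) • y + (∑ j : Fin (m+1), z ^ (j : ℕ) * c j) • v := by
  simp only [polyEval_mulVec, h, dotProduct_sum, dotProduct_smul, smul_add,
    Finset.sum_add_distrib, Finset.sum_smul, neg_smul, smul_smul, smul_eq_mul,
    Finset.sum_neg_distrib, smul_neg]

end PolyEval

section RankTwoUpdate

variable {κ R : Type*}

theorem dotProduct_mulVec_eq_zero_of_transpose_eq_neg [Fintype κ] [CommRing R]
    [IsAddTorsionFree R] {M : Matrix κ κ R} (hM : Mᵀ = -M) (x : κ → R) :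
    x ⬝ᵥ (M *ᵥ x) = 0 := by
  rw [← self_eq_neg]
  calc x ⬝ᵥ (M *ᵥ x) = x ⬝ᵥ (Mᵀ *ᵥ x) := by
        rw [dotProduct_mulVec, ← mulVec_transpose, dotProduct_comm]
    _ = -(x ⬝ᵥ (M *ᵥ x)) := by rw [hM, neg_mulVec, dotProduct_neg]

variable [CommRing R] (y r : κ → R) (a b c : R)

theorem transpose_symmetric_update :
    (-a • vecMulVec y y + c • (vecMulVec y r + vecMulVec r y - b • vecMulVec y y))ᵀ =
      -a • vecMulVec y y + c • (vecMulVec y r + vecMulVec r y - b • vecMulVec y y) := by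
  simp only [transpose_add, transpose_sub, transpose_smul, transpose_vecMulVec,
    add_comm (vecMulVec r y)]

theorem transpose_skew_update :
    (-(c • (vecMulVec y r - vecMulVec r y)))ᵀ = -(-(c • (vecMulVec y r - vecMulVec r y))) := by
  simp only [transpose_smul, transpose_sub, transpose_vecMulVec, smul_sub, neg_sub]

variable [Fintype κ] {x y} (hyx : y ⬝ᵥ x = 1)
include hyx

theorem symmetric_update_mulVec :
    (-a • vecMulVec y y + c • (vecMulVec y r + vecMulVec r y
      - (2 * (r ⬝ᵥ x)) • vecMulVec y y)) *ᵥ x = -a • y + c • (r - (r ⬝ᵥ x) • y) := by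
  simp only [add_mulVec, sub_mulVec, smul_mulVec, vecMulVec_mulVec, op_smul_eq_smul, hyx]
  module

theorem skew_update_mulVec :
    (-(c • (vecMulVec y r - vecMulVec r y))) *ᵥ x = c • (r - (r ⬝ᵥ x) • y) := by
  simp only [neg_mulVec, smul_mulVec, sub_mulVec, vecMulVec_mulVec, op_smul_eq_smul, hyx]
  module

end RankTwoUpdate

theorem structured_perturbation_exists_transpose_general {n m : ℕ}
    (A ΔA : Fin (m+1) → Matrix (Fin n) (Fin n) ℂ)
    (lam : ℂ) (x : Fin n → ℂ) (hx : star x ⬝ᵥ x = 1)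
    (r : Fin n → ℂ) (hr : r = -(polyEval A lam *ᵥ x))
    (hΔ : ∀ j : Fin (m+1),
      ((A j)ᵀ = A j ∧
        ΔA j = -(x ⬝ᵥ (A j *ᵥ x)) • vecMulVec (star x) (star x) +
          (conj (lam ^ (j : ℕ)) / (lamNormSq m lam : ℂ)) •
            (vecMulVec (star x) r + vecMulVec r (star x)
              - (2 * (r ⬝ᵥ x)) • vecMulVec (star x) (star x))) ∨
      ((A j)ᵀ = -(A j) ∧
        ΔA j = -((conj (lam ^ (j : ℕ)) / (lamNormSq m lam : ℂ)) •
            (vecMulVec (star x) r - vecMulVec r (star x))))) :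
    (polyEval A lam + polyEval ΔA lam) *ᵥ x = 0 ∧
    (∀ j : Fin (m+1),
      ((A j)ᵀ = A j ∧ (ΔA j)ᵀ = ΔA j) ∨ ((A j)ᵀ = -(A j) ∧ (ΔA j)ᵀ = -(ΔA j))) := by
  have hcoef : ∀ j : Fin (m+1), ΔA j *ᵥ x = -(x ⬝ᵥ (A j *ᵥ x)) • star x +
      (conj (lam ^ (j : ℕ)) / (lamNormSq m lam : ℂ)) • (r - (r ⬝ᵥ x) • star x) := by
    intro j
    rcases hΔ j with ⟨-, hΔj⟩ | ⟨hskew, hΔj⟩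
    · rw [hΔj, symmetric_update_mulVec _ _ _ hx]
    · rw [hΔj, skew_update_mulVec _ _ hx, dotProduct_mulVec_eq_zero_of_transpose_eq_neg hskew,
        neg_zero, zero_smul, zero_add]
  refine ⟨?_, fun j => ?_⟩
  · rw [add_mulVec, polyEval_mulVec_eq_of_coeff_mulVec hcoef, sum_pow_mul_conj_div_lamNormSq,
      ← neg_neg (polyEval A lam *ᵥ x), ← hr, dotProduct_neg, neg_neg, dotProduct_comm]
    module
  · rcases hΔ j with ⟨hsym, hΔj⟩ | ⟨hskew, hΔj⟩
    · exact Or.inl ⟨hsym, hΔj ▸ transpose_symmetric_update ..⟩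
    · exact Or.inr ⟨hskew, hΔj ▸ transpose_skew_update ..⟩

/-- Existence of a structure-preserving perturbation (transpose structures):
the explicitly constructed `ΔP` satisfies `P(λ)x + ΔP(λ)x = 0` and each coefficient `ΔA_j`
is symmetric when `A_j` is (first case of the construction) and skew-symmetric when `A_j`
is (second case of the construction). -/
theorem structured_perturbation_exists_transpose {n m : ℕ}
    (A ΔA : Fin (m+1) → Matrix (Fin n) (Fin n) ℂ)
    (lam : ℂ) (x : Fin n → ℂ) (hx : star x ⬝ᵥ x = 1)
    (r : Fin n → ℂ) (hr : r = -(polyEval A lam *ᵥ x))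
    (hstruct : ∀ j : Fin (m+1), (A j)ᵀ = A j ∨ (A j)ᵀ = -(A j))
    (hΔ : ∀ j : Fin (m+1),
      ((A j)ᵀ = A j ∧
        ΔA j = -(x ⬝ᵥ (A j *ᵥ x)) • vecMulVec (star x) (star x) +
          (conj (lam ^ (j : ℕ)) / (lamNormSq m lam : ℂ)) •
            (vecMulVec (star x) r + vecMulVec r (star x)
              - (2 * (r ⬝ᵥ x)) • vecMulVec (star x) (star x))) ∨
      ((A j)ᵀ = -(A j) ∧
        ΔA j = -((conj (lam ^ (j : ℕ)) / (lamNormSq m lam : ℂ)) •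
            (vecMulVec (star x) r - vecMulVec r (star x))))) :
    (polyEval A lam + polyEval ΔA lam) *ᵥ x = 0 ∧
    (∀ j : Fin (m+1),
      ((A j)ᵀ = A j ∧ (ΔA j)ᵀ = ΔA j) ∨ ((A j)ᵀ = -(A j) ∧ (ΔA j)ᵀ = -(ΔA j))) :=
  structured_perturbation_exists_transpose_general A ΔA lam x hx r hr hΔ
end
end

section
/- Let S be the set of T-even matrix polynomials in P_m(ℂ^{n×n}) and let P ∈ S be regular. Let λ ∈ ℂ and x ∈ ℂⁿ with x^H x = 1, and set r := −P(λ)x, Λ_m := (1, λ, …, λ^m)ᵀ, and P_x := I − x x^H. Then for the spectral norm, η_2^S(λ, x, P) = sqrt( |xᵀr|²/‖Π_e(Λ_m)‖₂² + (‖r‖₂² − |xᵀr|²)/‖Λ_m‖₂² ). Moreover, if |xᵀr| < ‖r‖₂, then defining E_j := (conj(λ^j)/‖Π_e(Λ_m)‖₂²)·(xᵀr)·x̄ x^H + (conj(λ^j)/‖Λ_m‖₂²)·(x̄ rᵀ P_x + P_xᵀ r x^H) for even j, E_j := (conj(λ^j)/‖Λ_m‖₂²)·(P_xᵀ r x^H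 − x̄ rᵀ P_x) for odd j, and ΔA_j := E_j − conj(λ^j)·conj(xᵀr)·P_xᵀ r rᵀ P_x / (‖Π_e(Λ_m)‖₂²·(‖r‖₂² − |xᵀr|²)) for even j and ΔA_j := E_j for odd j, the polynomial ΔP(z) := Σ_{j=0}^m z^j ΔA_j is T-even, satisfies P(λ)x + ΔP(λ)x = 0, and |||ΔP|||₂ = η_2^S(λ, x, P). -/
open scoped ComplexConjugate
open Matrix

noncomputable section

variable {ι : Type*} [Fintype ι] [DecidableEq ι]

/-- The class of T-even matrix polynomials: symmetric coefficients at even indices,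
skew-symmetric coefficients at odd indices. -/
def TevenPoly {ι : Type*} [Fintype ι] [DecidableEq ι] {m : ℕ} :
    Set (Fin (m+1) → Matrix ι ι ℂ) :=
  {B | ∀ j : Fin (m+1), (Even (j : ℕ) → (B j)ᵀ = B j) ∧ (¬ Even (j : ℕ) → (B j)ᵀ = -(B j))}

/-- `‖Π_e(Λ_m)‖₂²`, the squared norm of the even-index part of `(1, z, …, z^m)`. -/
def lamEvenNormSq (m : ℕ) (z : ℂ) : ℝ :=
  ∑ j : Fin (m+1), if Even (j : ℕ) then ‖z ^ (j : ℕ)‖ ^ 2 else 0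


/-!
Write `s = xᵀ r` and `w = P_xᵀ r = r - s x̄`, so that `r = s x̄ + w` with `w ⟂ x̄` and
`‖w‖² = ‖r‖² - |s|²`.

If `ΔP` is T-even with `ΔP(λ) x = r`, then `xᵀ ΔA_j x = 0` for odd `j` by skew-symmetry.
Splitting every `ΔA_j x` into its component along `x̄` and the rest, `r = ∑ λʲ ΔA_j x` gives
`s = ∑_{j even} λʲ xᵀ ΔA_j x` and `w = ∑_j λʲ (ΔA_j x - (xᵀ ΔA_j x) x̄)`, and Cauchy–Schwarz on
both sums gives `|s|² / ‖Π_e(Λ_m)‖² + ‖w‖² / ‖Λ_m‖² ≤ ∑ ‖ΔA_j x‖² ≤ ∑ ‖ΔA_j‖₂²`.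

The given `ΔA_j` is `conj(λʲ)` times one fixed symmetric matrix for even `j` and one fixed
skew-symmetric matrix for odd `j`. Each of them sends `y` to a combination of `x̄` and `w / ‖w‖`
whose coefficients are `(x^H y, (w / ‖w‖)ᵀ y)` multiplied by a `2 × 2` matrix with orthogonal
columns of equal norm; by Bessel's inequality that norm bounds its spectral norm, and summing over
`j` the bounds add up to the lower bound.
-/

open scoped InnerProductSpace

theorem norm_sum_smul_sq_le {𝕜 F κ : Type*} [NormedField 𝕜] [SeminormedAddCommGroup F]
    [NormedSpace 𝕜 F] (s : Finset κ) (c : κ → 𝕜) (v : κ → F) :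
    ‖∑ j ∈ s, c j • v j‖ ^ 2 ≤ (∑ j ∈ s, ‖c j‖ ^ 2) * ∑ j ∈ s, ‖v j‖ ^ 2 := by
  calc ‖∑ j ∈ s, c j • v j‖ ^ 2 ≤ (∑ j ∈ s, ‖c j‖ * ‖v j‖) ^ 2 := by
        gcongr
        exact (norm_sum_le _ _).trans_eq (by simp only [norm_smul])
    _ ≤ _ := Finset.sum_mul_sq_le_sq_mul_sq _ _ _

section InnerProductSpace

variable {𝕜 E : Type*} [RCLike 𝕜] [NormedAddCommGroup E] [InnerProductSpace 𝕜 E]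

theorem norm_sq_eq_norm_inner_sq_add_norm_sub_sq {e : E} (he : ‖e‖ = 1) (v : E) :
    ‖v‖ ^ 2 = ‖⟪e, v⟫_𝕜‖ ^ 2 + ‖v - ⟪e, v⟫_𝕜 • e‖ ^ 2 := by
  have horth : ⟪⟪e, v⟫_𝕜 • e, v - ⟪e, v⟫_𝕜 • e⟫_𝕜 = 0 := by
    rw [inner_sub_right, inner_smul_left, inner_smul_left, inner_smul_right,
      inner_self_eq_norm_sq_to_K, he]
    simp
  have := norm_add_sq_eq_norm_sq_add_norm_sq_of_inner_eq_zero _ _ horth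
  rwa [add_sub_cancel, norm_smul, he, mul_one, ← sq, ← sq, ← sq] at this

theorem norm_inner_sq_add_norm_inner_sq_le {e f : E} (he : ‖e‖ = 1) (hf : ‖f‖ ≤ 1)
    (hef : ⟪e, f⟫_𝕜 = 0) (y : E) :
    ‖⟪e, y⟫_𝕜‖ ^ 2 + ‖⟪f, y⟫_𝕜‖ ^ 2 ≤ ‖y‖ ^ 2 := by
  set z := y - ⟪e, y⟫_𝕜 • e
  have hfz : ⟪f, y⟫_𝕜 = ⟪f, z⟫_𝕜 := by
    rw [inner_sub_right, inner_smul_right, (inner_eq_zero_symm (𝕜 := 𝕜)).mp hef, mul_zero, sub_zero]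
  have hz : ‖⟪f, z⟫_𝕜‖ ≤ ‖z‖ :=
    (norm_inner_le_norm f z).trans (mul_le_of_le_one_left (norm_nonneg z) hf)
  rw [norm_sq_eq_norm_inner_sq_add_norm_sub_sq (𝕜 := 𝕜) he y, hfz]
  gcongr

theorem norm_smul_add_smul_sq_le {e f : E} (he : ‖e‖ = 1) (hf : ‖f‖ ≤ 1)
    (hef : ⟪e, f⟫_𝕜 = 0) (a b : 𝕜) :
    ‖a • e + b • f‖ ^ 2 ≤ ‖a‖ ^ 2 + ‖b‖ ^ 2 := by
  have horth : ⟪a • e, b • f⟫_𝕜 = 0 := by simp [inner_smul_left, inner_smul_right, hef]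
  rw [sq, norm_add_sq_eq_norm_sq_add_norm_sq_of_inner_eq_zero _ _ horth, norm_smul, norm_smul, he,
    mul_one, ← sq, ← sq, mul_pow]
  gcongr
  exact mul_le_of_le_one_right (sq_nonneg _) (pow_le_one₀ (norm_nonneg f) hf)

-- `hcol` says that the columns of `!![α, γ; γ', δ]` are orthogonal.
theorem norm_mul_add_mul_sq_add_norm_mul_add_mul_sq {α γ γ' δ : 𝕜}
    (hcol : conj α * γ + conj γ' * δ = 0) (u v : 𝕜) :
    ‖α * u + γ * v‖ ^ 2 + ‖γ' * u + δ * v‖ ^ 2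
      = (‖α‖ ^ 2 + ‖γ'‖ ^ 2) * ‖u‖ ^ 2 + (‖γ‖ ^ 2 + ‖δ‖ ^ 2) * ‖v‖ ^ 2 := by
  have hcol' : α * conj γ + γ' * conj δ = 0 := by
    simpa using congrArg conj hcol
  apply RCLike.ofReal_injective (K := 𝕜)
  push_cast
  simp only [← RCLike.mul_conj, map_add, map_mul]
  linear_combination (conj u * v) * hcol + (u * conj v) * hcol'

theorem norm_rankTwo_sq_le {e f e' f' : E} (he : ‖e‖ = 1) (hf : ‖f‖ ≤ 1) (hef : ⟪e, f⟫_𝕜 = 0)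
    (he' : ‖e'‖ = 1) (hf' : ‖f'‖ ≤ 1) (hef' : ⟪e', f'⟫_𝕜 = 0) {α γ γ' δ : 𝕜} {c : ℝ}
    (hcol : conj α * γ + conj γ' * δ = 0) (h₁ : ‖α‖ ^ 2 + ‖γ'‖ ^ 2 ≤ c)
    (h₂ : ‖γ‖ ^ 2 + ‖δ‖ ^ 2 ≤ c) (y : E) :
    ‖(α * ⟪e', y⟫_𝕜 + γ * ⟪f', y⟫_𝕜) • e + (γ' * ⟪e', y⟫_𝕜 + δ * ⟪f', y⟫_𝕜) • f‖ ^ 2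
      ≤ c * ‖y‖ ^ 2 := by
  calc _ ≤ ‖α * ⟪e', y⟫_𝕜 + γ * ⟪f', y⟫_𝕜‖ ^ 2 + ‖γ' * ⟪e', y⟫_𝕜 + δ * ⟪f', y⟫_𝕜‖ ^ 2 :=
        norm_smul_add_smul_sq_le he hf hef _ _
    _ = (‖α‖ ^ 2 + ‖γ'‖ ^ 2) * ‖⟪e', y⟫_𝕜‖ ^ 2 + (‖γ‖ ^ 2 + ‖δ‖ ^ 2) * ‖⟪f', y⟫_𝕜‖ ^ 2 :=
        norm_mul_add_mul_sq_add_norm_mul_add_mul_sq hcol _ _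
    _ ≤ c * (‖⟪e', y⟫_𝕜‖ ^ 2 + ‖⟪f', y⟫_𝕜‖ ^ 2) := by
        rw [mul_add]; gcongr
    _ ≤ c * ‖y‖ ^ 2 := by
        gcongr
        · exact (by positivity : (0:ℝ) ≤ ‖α‖ ^ 2 + ‖γ'‖ ^ 2).trans h₁
        · exact norm_inner_sq_add_norm_inner_sq_le he' hf' hef' y

theorem norm_inner_sq_div_add_norm_sub_sq_div_le {κ : Type*} (s : Finset κ) (p : κ → Prop)
    [DecidablePred p] (c : κ → 𝕜) (v : κ → E) {e R : E} (he : ‖e‖ = 1)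
    (hv : ∀ j ∈ s, ¬ p j → ⟪e, v j⟫_𝕜 = 0) (hR : ∑ j ∈ s, c j • v j = R) :
    ‖⟪e, R⟫_𝕜‖ ^ 2 / ∑ j ∈ s with p j, ‖c j‖ ^ 2
      + ‖R - ⟪e, R⟫_𝕜 • e‖ ^ 2 / ∑ j ∈ s, ‖c j‖ ^ 2 ≤ ∑ j ∈ s, ‖v j‖ ^ 2 := by
  set α : κ → 𝕜 := fun j => ⟪e, v j⟫_𝕜
  set W : κ → E := fun j => v j - α j • e
  have hαR : ⟪e, R⟫_𝕜 = ∑ j ∈ s, c j • α j := by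
    simp only [← hR, inner_sum, inner_smul_right, smul_eq_mul, α]
  have hαR_filter : ⟪e, R⟫_𝕜 = ∑ j ∈ s with p j, c j • α j := by
    rw [Finset.sum_filter, hαR]
    refine Finset.sum_congr rfl fun j hj => ?_
    split_ifs with hpj
    · rfl
    · simp [α, hv j hj hpj]
  have hWR : R - ⟪e, R⟫_𝕜 • e = ∑ j ∈ s, c j • W j := by
    simp only [W, smul_sub, Finset.sum_sub_distrib, smul_smul, ← Finset.sum_smul, hR, hαR,
      smul_eq_mul]
  have hα : ‖⟪e, R⟫_𝕜‖ ^ 2 / ∑ j ∈ s with p j, ‖c j‖ ^ 2 ≤ ∑ j ∈ s, ‖α j‖ ^ 2 := by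
    refine div_le_of_le_mul₀ (Finset.sum_nonneg fun _ _ => by positivity)
      (Finset.sum_nonneg fun _ _ => by positivity) ?_
    rw [hαR_filter, mul_comm]
    refine (norm_sum_smul_sq_le _ _ _).trans ?_
    gcongr
    exact Finset.filter_subset _ _
  have hW : ‖R - ⟪e, R⟫_𝕜 • e‖ ^ 2 / ∑ j ∈ s, ‖c j‖ ^ 2 ≤ ∑ j ∈ s, ‖W j‖ ^ 2 := by
    refine div_le_of_le_mul₀ (Finset.sum_nonneg fun _ _ => by positivity)
      (Finset.sum_nonneg fun _ _ => by positivity) ?_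
    rw [hWR, mul_comm]
    exact norm_sum_smul_sq_le _ _ _
  calc _ ≤ ∑ j ∈ s, ‖α j‖ ^ 2 + ∑ j ∈ s, ‖W j‖ ^ 2 := add_le_add hα hW
    _ = ∑ j ∈ s, ‖v j‖ ^ 2 := by
        rw [← Finset.sum_add_distrib]
        exact Finset.sum_congr rfl fun j _ => (norm_sq_eq_norm_inner_sq_add_norm_sub_sq he _).symm

end InnerProductSpace

open WithLp

section Matrix

variable {n : Type*} [Fintype n]

theorem norm_toLp_sq (y : n → ℂ) : ‖toLp 2 y‖ ^ 2 = vecNormSq y :=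
  EuclideanSpace.norm_sq_eq _

theorem vecNorm_eq_norm_toLp (y : n → ℂ) : vecNorm y = ‖toLp 2 y‖ := by
  rw [EuclideanSpace.norm_eq]; rfl

theorem vecNorm_star (y : n → ℂ) : vecNorm (star y) = vecNorm y := by
  simp [vecNorm, vecNormSq]

theorem inner_toLp_star_toLp (u y : n → ℂ) : ⟪toLp 2 (star u), toLp 2 y⟫_ℂ = u ⬝ᵥ y := by
  rw [EuclideanSpace.inner_toLp_toLp, star_star, dotProduct_comm]

theorem ofReal_vecNormSq (x : n → ℂ) : (vecNormSq x : ℂ) = star x ⬝ᵥ x := by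
  simp only [vecNormSq, dotProduct, Pi.star_apply, RCLike.star_def, Complex.conj_mul']
  push_cast
  rfl

theorem vecNormSq_eq_one {x : n → ℂ} (hx : star x ⬝ᵥ x = 1) : vecNormSq x = 1 := by
  exact_mod_cast (ofReal_vecNormSq x).trans hx

theorem vecNorm_eq_one {x : n → ℂ} (hx : star x ⬝ᵥ x = 1) : vecNorm x = 1 := by
  rw [vecNorm, vecNormSq_eq_one hx, Real.sqrt_one]

theorem vecNormSq_sub_smul_star {x : n → ℂ} (hx : star x ⬝ᵥ x = 1) (r : n → ℂ) :
    vecNormSq (r - (x ⬝ᵥ r) • star x) = vecNormSq r - ‖x ⬝ᵥ r‖ ^ 2 := by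
  have he : ‖toLp 2 (star x)‖ = 1 := by
    rw [← vecNorm_eq_norm_toLp, vecNorm_star, vecNorm_eq_one hx]
  have := norm_sq_eq_norm_inner_sq_add_norm_sub_sq (𝕜 := ℂ) he (toLp 2 r)
  rw [inner_toLp_star_toLp, ← toLp_smul, ← toLp_sub, norm_toLp_sq, norm_toLp_sq] at this
  linarith

theorem vecNorm_inv_smul_self_le_one (w : n → ℂ) : vecNorm ((vecNorm w : ℂ)⁻¹ • w) ≤ 1 := by
  have h0 : 0 ≤ vecNorm w := Real.sqrt_nonneg _
  rw [vecNorm_eq_norm_toLp, toLp_smul, norm_smul, ← vecNorm_eq_norm_toLp, norm_inv,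
    Complex.norm_real, Real.norm_of_nonneg h0]
  exact inv_mul_le_one_of_le₀ le_rfl h0

theorem vecNorm_smul_inv_smul_self (w : n → ℂ) :
    (vecNorm w : ℂ) • ((vecNorm w : ℂ)⁻¹ • w) = w := by
  rcases eq_or_ne (vecNorm w) 0 with h | h
  · rw [vecNorm_eq_norm_toLp, norm_eq_zero, toLp_eq_zero] at h
    simp [h]
  · rw [smul_smul, mul_inv_cancel₀ (by exact_mod_cast h), one_smul]

theorem vecNorm_sq (y : n → ℂ) : vecNorm y ^ 2 = vecNormSq y :=
  Real.sq_sqrt (Finset.sum_nonneg fun _ _ => sq_nonneg _)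

theorem exists_smul_of_star_dotProduct_eq_zero {p w : n → ℂ} (hpw : star p ⬝ᵥ w = 0) :
    ∃ q, vecNorm q ≤ 1 ∧ star p ⬝ᵥ q = 0 ∧ w = (vecNorm w : ℂ) • q :=
  ⟨_, vecNorm_inv_smul_self_le_one w, by rw [dotProduct_smul, hpw, smul_zero],
    (vecNorm_smul_inv_smul_self w).symm⟩

theorem specNorm_smul [DecidableEq n] (a : ℂ) (M : Matrix n n ℂ) :
    specNorm (a • M) = ‖a‖ * specNorm M := by
  simp only [specNorm, map_smul, norm_smul]

theorem specNorm_sq_le_of_forall [DecidableEq n] {M : Matrix n n ℂ} {c : ℝ} (hc : 0 ≤ c)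
    (h : ∀ y : n → ℂ, vecNormSq (M *ᵥ y) ≤ c * vecNormSq y) : specNorm M ^ 2 ≤ c := by
  have hle : specNorm M ≤ √c := by
    refine ContinuousLinearMap.opNorm_le_bound _ (Real.sqrt_nonneg c) fun y => ?_
    obtain ⟨y⟩ := y
    refine (pow_le_pow_iff_left₀ (norm_nonneg _) (by positivity) two_ne_zero).mp ?_
    rw [Matrix.toEuclideanCLM_toLp, mul_pow, Real.sq_sqrt hc, norm_toLp_sq, norm_toLp_sq]
    exact h y
  calc specNorm M ^ 2 ≤ √c ^ 2 := by gcongr; exact norm_nonneg _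
    _ = c := Real.sq_sqrt hc

theorem vecNormSq_mulVec_le [DecidableEq n] (M : Matrix n n ℂ) (y : n → ℂ) :
    vecNormSq (M *ᵥ y) ≤ specNorm M ^ 2 * vecNormSq y := by
  rw [← norm_toLp_sq, ← norm_toLp_sq, ← mul_pow, ← Matrix.toEuclideanCLM_toLp]
  gcongr
  exact ContinuousLinearMap.le_opNorm _ _

theorem specNorm_sq_le_of_rankTwo [DecidableEq n] {p q : n → ℂ} (hp : vecNorm p = 1)
    (hq : vecNorm q ≤ 1) (hpq : star p ⬝ᵥ q = 0) {α γ γ' δ : ℂ} {c : ℝ}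
    (hcol : conj α * γ + conj γ' * δ = 0) (h₁ : ‖α‖ ^ 2 + ‖γ'‖ ^ 2 ≤ c)
    (h₂ : ‖γ‖ ^ 2 + ‖δ‖ ^ 2 ≤ c) :
    specNorm (α • vecMulVec p p + γ • vecMulVec p q + γ' • vecMulVec q p + δ • vecMulVec q q) ^ 2
      ≤ c := by
  refine specNorm_sq_le_of_forall ((by positivity : (0:ℝ) ≤ ‖α‖ ^ 2 + ‖γ'‖ ^ 2).trans h₁)
    fun y => ?_
  have hG : (α • vecMulVec p p + γ • vecMulVec p q + γ' • vecMulVec q p + δ • vecMulVec q q) *ᵥ y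
      = (α * (p ⬝ᵥ y) + γ * (q ⬝ᵥ y)) • p + (γ' * (p ⬝ᵥ y) + δ * (q ⬝ᵥ y)) • q := by
    simp only [add_mulVec, smul_mulVec, vecMulVec_mulVec, op_smul_eq_smul]
    module
  have he : ‖toLp 2 p‖ = 1 := by rwa [← vecNorm_eq_norm_toLp]
  have he' : ‖toLp 2 (star p)‖ = 1 := by rwa [← vecNorm_eq_norm_toLp, vecNorm_star]
  have hf : ‖toLp 2 q‖ ≤ 1 := by rwa [← vecNorm_eq_norm_toLp]
  have hf' : ‖toLp 2 (star q)‖ ≤ 1 := by rwa [← vecNorm_eq_norm_toLp, vecNorm_star]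
  have hef : ⟪toLp 2 p, toLp 2 q⟫_ℂ = 0 := by
    rw [EuclideanSpace.inner_toLp_toLp, dotProduct_comm, hpq]
  have hef' : ⟪toLp 2 (star p), toLp 2 (star q)⟫_ℂ = 0 := by
    rw [inner_toLp_star_toLp, dotProduct_comm, ← star_star p, star_dotProduct_star, hpq,
      star_zero]
  have := norm_rankTwo_sq_le he hf hef he' hf' hef' hcol h₁ h₂ (toLp 2 y)
  rwa [inner_toLp_star_toLp, inner_toLp_star_toLp, ← toLp_smul, ← toLp_smul, ← toLp_add, ← hG,
    norm_toLp_sq, norm_toLp_sq] at this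

theorem dotProduct_mulVec_self_eq_zero {R : Type*} [CommRing R] [NoZeroDivisors R] [CharZero R]
    {B : Matrix n n R} (hB : Bᵀ = -B) (x : n → R) : x ⬝ᵥ (B *ᵥ x) = 0 := by
  rw [← CharZero.eq_neg_self_iff]
  calc x ⬝ᵥ (B *ᵥ x) = (Bᵀ *ᵥ x) ⬝ᵥ x := by rw [dotProduct_mulVec, mulVec_transpose]
    _ = -(x ⬝ᵥ (B *ᵥ x)) := by rw [hB, neg_mulVec, neg_dotProduct, dotProduct_comm]

theorem dotProduct_sub_smul_star {x : n → ℂ} (hx : star x ⬝ᵥ x = 1) (r : n → ℂ) :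
    x ⬝ᵥ (r - (x ⬝ᵥ r) • star x) = 0 := by
  rw [dotProduct_sub, dotProduct_smul, dotProduct_comm x (star x), hx, smul_eq_mul, mul_one,
    sub_self]

end Matrix

section Coefficients

variable {n : Type*}

def skewCoeff (p w : n → ℂ) (b : ℝ) : Matrix n n ℂ :=
  (b : ℂ) • (vecMulVec w p - vecMulVec p w)

theorem transpose_skewCoeff (p w : n → ℂ) (b : ℝ) :
    (skewCoeff p w b)ᵀ = -skewCoeff p w b := by
  simp only [skewCoeff, transpose_sub, transpose_smul, transpose_vecMulVec, ← smul_neg, neg_sub]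

variable [Fintype n]

def symmCoeff (p w : n → ℂ) (a : ℂ) (b : ℝ) : Matrix n n ℂ :=
  a • vecMulVec p p + (b : ℂ) • (vecMulVec p w + vecMulVec w p)
    - (conj a / (vecNormSq w : ℂ)) • vecMulVec w w

theorem transpose_symmCoeff (p w : n → ℂ) (a : ℂ) (b : ℝ) :
    (symmCoeff p w a b)ᵀ = symmCoeff p w a b := by
  simp only [symmCoeff, transpose_sub, transpose_add, transpose_smul, transpose_vecMulVec,
    add_comm (vecMulVec w p)]

theorem symmCoeff_mulVec {p w y : n → ℂ} (hp : p ⬝ᵥ y = 1) (hw : w ⬝ᵥ y = 0) (a : ℂ) (b : ℝ) :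
    symmCoeff p w a b *ᵥ y = a • p + (b : ℂ) • w := by
  simp only [symmCoeff, sub_mulVec, add_mulVec, smul_mulVec, vecMulVec_mulVec, op_smul_eq_smul,
    hp, hw]
  module

theorem skewCoeff_mulVec {p w y : n → ℂ} (hp : p ⬝ᵥ y = 1) (hw : w ⬝ᵥ y = 0) (b : ℝ) :
    skewCoeff p w b *ᵥ y = (b : ℂ) • w := by
  simp only [skewCoeff, sub_mulVec, smul_mulVec, vecMulVec_mulVec, op_smul_eq_smul, hp, hw]
  module

theorem specNorm_symmCoeff_sq_le [DecidableEq n] {p w : n → ℂ} (hp : vecNorm p = 1)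
    (hpw : star p ⬝ᵥ w = 0) (a : ℂ) (b : ℝ) :
    specNorm (symmCoeff p w a b) ^ 2 ≤ ‖a‖ ^ 2 + b ^ 2 * vecNormSq w := by
  obtain ⟨q, hq, hpq, hwq⟩ := exists_smul_of_star_dotProduct_eq_zero hpw
  rw [← vecNorm_sq]
  set t := vecNorm w with ht
  have hG : symmCoeff p w a b = a • vecMulVec p p + ((b * t : ℝ) : ℂ) • vecMulVec p q
      + ((b * t : ℝ) : ℂ) • vecMulVec q p
      + (-(conj a / (t : ℂ) ^ 2 * (t : ℂ) ^ 2)) • vecMulVec q q := by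
    rw [symmCoeff, ← vecNorm_sq, ← ht, hwq]
    simp only [smul_vecMulVec, vecMulVec_smul]
    push_cast
    module
  rw [hG]
  rcases eq_or_ne t 0 with ht0 | ht0
  · refine specNorm_sq_le_of_rankTwo hp hq hpq ?_ ?_ ?_ <;> simp [ht0]
  · rw [div_mul_cancel₀ _ (pow_ne_zero 2 (Complex.ofReal_ne_zero.mpr ht0))]
    refine specNorm_sq_le_of_rankTwo hp hq hpq ?_ ?_ ?_
    · simp only [Complex.conj_ofReal]; ring
    · simp [mul_pow]
    · simp [mul_pow, add_comm]

theorem specNorm_skewCoeff_sq_le [DecidableEq n] {p w : n → ℂ} (hp : vecNorm p = 1)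
    (hpw : star p ⬝ᵥ w = 0) (b : ℝ) :
    specNorm (skewCoeff p w b) ^ 2 ≤ b ^ 2 * vecNormSq w := by
  obtain ⟨q, hq, hpq, hwq⟩ := exists_smul_of_star_dotProduct_eq_zero hpw
  rw [← vecNorm_sq]
  set t := vecNorm w
  have hG : skewCoeff p w b = (0 : ℂ) • vecMulVec p p + ((-(b * t) : ℝ) : ℂ) • vecMulVec p q
      + ((b * t : ℝ) : ℂ) • vecMulVec q p + (0 : ℂ) • vecMulVec q q := by
    rw [skewCoeff, hwq, smul_vecMulVec, vecMulVec_smul]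
    push_cast
    module
  rw [hG]
  refine specNorm_sq_le_of_rankTwo hp hq hpq ?_ ?_ ?_
  · simp
  · simp [mul_pow]
  · simp [mul_pow]

end Coefficients

theorem one_le_lamEvenNormSq (m : ℕ) (z : ℂ) : 1 ≤ lamEvenNormSq m z := by
  have := Finset.single_le_sum
    (f := fun j : Fin (m+1) => if Even (j : ℕ) then ‖z ^ (j : ℕ)‖ ^ 2 else 0)
    (fun j _ => by positivity) (Finset.mem_univ 0)
  simpa [lamEvenNormSq] using this

theorem lamEvenNormSq_le_lamNormSq (m : ℕ) (z : ℂ) : lamEvenNormSq m z ≤ lamNormSq m z :=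
  Finset.sum_le_sum fun j _ => by split_ifs; exacts [le_rfl, by positivity]

theorem sum_norm_pow_sq_smul_ite {M : Type*} [AddCommGroup M] [Module ℝ M] (m : ℕ) (z : ℂ)
    (X Y : M) :
    ∑ j : Fin (m+1), ‖z ^ (j : ℕ)‖ ^ 2 • (if Even (j : ℕ) then X else Y)
      = lamEvenNormSq m z • X + (lamNormSq m z - lamEvenNormSq m z) • Y := by
  have hsplit : ∀ j : Fin (m+1), ‖z ^ (j : ℕ)‖ ^ 2 • (if Even (j : ℕ) then X else Y)
      = (if Even (j : ℕ) then ‖z ^ (j : ℕ)‖ ^ 2 else 0) • X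
        + (‖z ^ (j : ℕ)‖ ^ 2 - if Even (j : ℕ) then ‖z ^ (j : ℕ)‖ ^ 2 else 0) • Y := by
    intro j
    split_ifs <;> simp
  rw [Finset.sum_congr rfl fun j _ => hsplit j, Finset.sum_add_distrib, ← Finset.sum_smul,
    ← Finset.sum_smul, Finset.sum_sub_distrib, lamEvenNormSq, lamNormSq]

theorem eta_eq_of_forall_le {n : Type*} [Fintype n] {m : ℕ}
    {N : (Fin (m+1) → Matrix n n ℂ) → ℝ} {S : Set (Fin (m+1) → Matrix n n ℂ)} {lam : ℂ}
    {x : n → ℂ} {A ΔA : Fin (m+1) → Matrix n n ℂ} (hΔ : ΔA ∈ S)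
    (hsolve : (polyEval A lam + polyEval ΔA lam) *ᵥ x = 0)
    (hmin : ∀ B ∈ S, (polyEval A lam + polyEval B lam) *ᵥ x = 0 → N ΔA ≤ N B) :
    eta N S lam x A = N ΔA :=
  IsLeast.csInf_eq ⟨⟨ΔA, hΔ, hsolve, rfl⟩, by rintro t ⟨B, hB, hBs, rfl⟩; exact hmin B hB hBs⟩

section Teven

variable {n : Type*} [Fintype n]

/-- The perturbation `ΔP` of the theorem; note `P_xᵀ r = r - (xᵀ r) x̄`. -/
def tevenPerturbation (m : ℕ) (lam : ℂ) (x r : n → ℂ) : Fin (m+1) → Matrix n n ℂ := fun j =>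
  conj (lam ^ (j : ℕ)) • if Even (j : ℕ) then
      symmCoeff (star x) (r - (x ⬝ᵥ r) • star x) ((x ⬝ᵥ r) / lamEvenNormSq m lam)
        (lamNormSq m lam)⁻¹
    else skewCoeff (star x) (r - (x ⬝ᵥ r) • star x) (lamNormSq m lam)⁻¹

/-- `η₂^S(λ, x, P) ^ 2`, with `‖r‖² - |xᵀ r|²` written as `‖P_xᵀ r‖²`. -/
def tevenBound (m : ℕ) (lam : ℂ) (x r : n → ℂ) : ℝ :=
  ‖x ⬝ᵥ r‖ ^ 2 / lamEvenNormSq m lam + vecNormSq (r - (x ⬝ᵥ r) • star x) / lamNormSq m lam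

variable {m : ℕ}

theorem tevenPerturbation_mem [DecidableEq n] (lam : ℂ) (x r : n → ℂ) :
    tevenPerturbation m lam x r ∈ TevenPoly := by
  intro j
  refine ⟨fun hj => ?_, fun hj => ?_⟩ <;>
    simp only [tevenPerturbation, hj, if_true, if_false, transpose_smul, transpose_symmCoeff,
      transpose_skewCoeff, smul_neg]

theorem polyEval_tevenPerturbation_mulVec (lam : ℂ) {x : n → ℂ} (hx : star x ⬝ᵥ x = 1)
    (r : n → ℂ) : polyEval (tevenPerturbation m lam x r) lam *ᵥ x = r := by
  set s := x ⬝ᵥ r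
  set w := r - s • star x
  set Me := lamEvenNormSq m lam
  set Mf := lamNormSq m lam
  have hMe : 0 < Me := zero_lt_one.trans_le (one_le_lamEvenNormSq m lam)
  have hMf : 0 < Mf := hMe.trans_le (lamEvenNormSq_le_lamNormSq m lam)
  have hpoly : polyEval (tevenPerturbation m lam x r) lam
      = Me • symmCoeff (star x) w (s / Me) Mf⁻¹ + (Mf - Me) • skewCoeff (star x) w Mf⁻¹ := by
    rw [← sum_norm_pow_sq_smul_ite]
    refine Finset.sum_congr rfl fun j _ => ?_
    rw [tevenPerturbation, smul_smul, Complex.mul_conj, Complex.normSq_eq_norm_sq,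
      Complex.coe_smul]
  have hw : w ⬝ᵥ x = 0 := by rw [dotProduct_comm]; exact dotProduct_sub_smul_star hx r
  rw [hpoly, add_mulVec, smul_mulVec, smul_mulVec, symmCoeff_mulVec hx hw, skewCoeff_mulVec hx hw]
  have hMe' : (Me : ℂ) ≠ 0 := Complex.ofReal_ne_zero.mpr hMe.ne'
  have hMf' : (Mf : ℂ) ≠ 0 := Complex.ofReal_ne_zero.mpr hMf.ne'
  simp only [← Complex.coe_smul, w]
  match_scalars <;> field_simp <;> ring

theorem sum_specNorm_sq_tevenPerturbation_le [DecidableEq n] (lam : ℂ) {x : n → ℂ}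
    (hx : star x ⬝ᵥ x = 1) (r : n → ℂ) :
    ∑ j, specNorm (tevenPerturbation m lam x r j) ^ 2 ≤ tevenBound m lam x r := by
  set s := x ⬝ᵥ r
  set w := r - s • star x
  set Me := lamEvenNormSq m lam
  set Mf := lamNormSq m lam
  have hMe : 0 < Me := zero_lt_one.trans_le (one_le_lamEvenNormSq m lam)
  have hMf : 0 < Mf := hMe.trans_le (lamEvenNormSq_le_lamNormSq m lam)
  have hodd : 0 ≤ Mf - Me := sub_nonneg.mpr (lamEvenNormSq_le_lamNormSq m lam)
  have hp : vecNorm (star x) = 1 := by rw [vecNorm_star, vecNorm_eq_one hx]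
  have hpw : star (star x) ⬝ᵥ w = 0 := by rw [star_star]; exact dotProduct_sub_smul_star hx r
  have hterm : ∀ j : Fin (m+1), specNorm (tevenPerturbation m lam x r j) ^ 2
      = ‖lam ^ (j : ℕ)‖ ^ 2 •
          if Even (j : ℕ) then specNorm (symmCoeff (star x) w (s / Me) Mf⁻¹) ^ 2
          else specNorm (skewCoeff (star x) w Mf⁻¹) ^ 2 := by
    intro j
    rw [tevenPerturbation, specNorm_smul, RCLike.norm_conj, mul_pow, smul_eq_mul]
    split_ifs <;> rfl
  rw [Finset.sum_congr rfl fun j _ => hterm j, sum_norm_pow_sq_smul_ite, smul_eq_mul, smul_eq_mul]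
  calc _ ≤ Me * (‖s / Me‖ ^ 2 + Mf⁻¹ ^ 2 * vecNormSq w)
        + (Mf - Me) * (Mf⁻¹ ^ 2 * vecNormSq w) := by
        gcongr
        · exact specNorm_symmCoeff_sq_le hp hpw _ _
        · exact specNorm_skewCoeff_sq_le hp hpw _
    _ = ‖s‖ ^ 2 / Me + vecNormSq w / Mf := by
        rw [norm_div, Complex.norm_real, Real.norm_of_nonneg hMe.le]
        field_simp
        ring

theorem tevenBound_le_sum_specNorm_sq [DecidableEq n] {B : Fin (m+1) → Matrix n n ℂ}
    (hB : B ∈ TevenPoly) (lam : ℂ) {x : n → ℂ} (hx : star x ⬝ᵥ x = 1) :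
    tevenBound m lam x (polyEval B lam *ᵥ x) ≤ ∑ j, specNorm (B j) ^ 2 := by
  have he : ‖toLp 2 (star x)‖ = 1 := by
    rw [← vecNorm_eq_norm_toLp, vecNorm_star, vecNorm_eq_one hx]
  have hodd : ∀ j ∈ (Finset.univ : Finset (Fin (m+1))), ¬ Even (j : ℕ) →
      ⟪toLp 2 (star x), toEuclideanCLM (𝕜 := ℂ) (B j) (toLp 2 x)⟫_ℂ = 0 := by
    intro j _ hj
    rw [toEuclideanCLM_toLp, inner_toLp_star_toLp]
    exact dotProduct_mulVec_self_eq_zero ((hB j).2 hj) x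
  have hsum : ∑ j : Fin (m+1), lam ^ (j : ℕ) • toEuclideanCLM (𝕜 := ℂ) (B j) (toLp 2 x)
      = toLp 2 (polyEval B lam *ᵥ x) := by
    simp only [polyEval, ← toEuclideanCLM_toLp, map_sum, map_smul,
      _root_.sum_apply, _root_.smul_apply]
  have key := norm_inner_sq_div_add_norm_sub_sq_div_le Finset.univ
    (fun j : Fin (m+1) => Even (j : ℕ)) (fun j => lam ^ (j : ℕ)) _ he hodd hsum
  rw [inner_toLp_star_toLp, ← toLp_smul, ← toLp_sub, norm_toLp_sq, Finset.sum_filter] at key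
  refine key.trans (Finset.sum_le_sum fun j _ => ?_)
  rw [toEuclideanCLM_toLp, norm_toLp_sq]
  simpa [vecNormSq_eq_one hx] using vecNormSq_mulVec_le (B j) x

theorem sqrt_tevenBound_le_polyNorm2 [DecidableEq n] {A B : Fin (m+1) → Matrix n n ℂ}
    (hB : B ∈ TevenPoly) {lam : ℂ} {x r : n → ℂ} (hx : star x ⬝ᵥ x = 1)
    (hr : r = -(polyEval A lam *ᵥ x)) (hBx : (polyEval A lam + polyEval B lam) *ᵥ x = 0) :
    √(tevenBound m lam x r) ≤ polyNorm2 B := by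
  rw [add_mulVec, ← neg_neg (polyEval A lam *ᵥ x), ← hr, neg_add_eq_zero] at hBx
  rw [hBx]
  exact Real.sqrt_le_sqrt (tevenBound_le_sum_specNorm_sq hB lam hx)

end Teven

theorem Teven_backward_error_spectral_general {n m : ℕ}
    (A : Fin (m+1) → Matrix (Fin n) (Fin n) ℂ)
    (lam : ℂ) (x : Fin n → ℂ) (hx : star x ⬝ᵥ x = 1)
    (r : Fin n → ℂ) (hr : r = -(polyEval A lam *ᵥ x))
    (Px : Matrix (Fin n) (Fin n) ℂ) (hPx : Px = 1 - vecMulVec x (star x))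
    (ΔA : Fin (m+1) → Matrix (Fin n) (Fin n) ℂ)
    (hΔ : ∀ j : Fin (m+1),
      ΔA j = if Even (j : ℕ) then
          ((conj (lam ^ (j : ℕ)) * (x ⬝ᵥ r)) / (lamEvenNormSq m lam : ℂ)) •
              vecMulVec (star x) (star x)
            + (conj (lam ^ (j : ℕ)) / (lamNormSq m lam : ℂ)) •
              (vecMulVec (star x) r * Px + Pxᵀ * vecMulVec r (star x))
            - (conj (lam ^ (j : ℕ)) * conj (x ⬝ᵥ r) /
                ((lamEvenNormSq m lam : ℂ) * ((vecNormSq r - ‖x ⬝ᵥ r‖ ^ 2 : ℝ) : ℂ))) •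
              (Pxᵀ * vecMulVec r r * Px)
        else
          (conj (lam ^ (j : ℕ)) / (lamNormSq m lam : ℂ)) •
            (Pxᵀ * vecMulVec r (star x) - vecMulVec (star x) r * Px)) :
    eta polyNorm2 TevenPoly lam x A
      = Real.sqrt (‖x ⬝ᵥ r‖ ^ 2 / lamEvenNormSq m lam
          + (vecNormSq r - ‖x ⬝ᵥ r‖ ^ 2) / lamNormSq m lam) ∧
    (‖x ⬝ᵥ r‖ < vecNorm r →
      ΔA ∈ TevenPoly ∧
      (polyEval A lam + polyEval ΔA lam) *ᵥ x = 0 ∧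
      polyNorm2 ΔA = eta polyNorm2 TevenPoly lam x A) := by
  have hPxr : r ᵥ* Px = r - (x ⬝ᵥ r) • star x := by
    rw [hPx, vecMul_sub, vecMul_one, vecMul_vecMulVec, dotProduct_comm]
  have hΔ' : ΔA = tevenPerturbation m lam x r := by
    funext j
    rw [hΔ j, tevenPerturbation, ← vecNormSq_sub_smul_star hx, vecMulVec_mul, mul_vecMulVec,
      mul_vecMulVec, vecMulVec_mul, mulVec_transpose, hPxr]
    split_ifs
    · simp only [symmCoeff, map_div₀, Complex.conj_ofReal]
      push_cast
      module
    · simp only [skewCoeff]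
      push_cast
      module
  subst hΔ'
  have hsolve : (polyEval A lam + polyEval (tevenPerturbation m lam x r) lam) *ᵥ x = 0 := by
    rw [add_mulVec, polyEval_tevenPerturbation_mulVec lam hx, hr, add_neg_cancel]
  have hnorm : polyNorm2 (tevenPerturbation m lam x r) = √(tevenBound m lam x r) :=
    le_antisymm (Real.sqrt_le_sqrt (sum_specNorm_sq_tevenPerturbation_le lam hx r))
      (sqrt_tevenBound_le_polyNorm2 (tevenPerturbation_mem lam x r) hx hr hsolve)
  have heta : eta polyNorm2 TevenPoly lam x A = polyNorm2 (tevenPerturbation m lam x r) :=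
    eta_eq_of_forall_le (tevenPerturbation_mem lam x r) hsolve
      fun B hB hBx => hnorm ▸ sqrt_tevenBound_le_polyNorm2 hB hx hr hBx
  rw [tevenBound, vecNormSq_sub_smul_star hx] at hnorm
  exact ⟨heta.trans hnorm, fun _ => ⟨tevenPerturbation_mem lam x r, hsolve, heta.symm⟩⟩

/-- Structured backward error of an approximate eigenpair of a T-even
matrix polynomial, spectral norm: explicit formula and (when `|xᵀr| < ‖r‖₂`) the explicitly
given minimal T-even perturbation. -/
theorem Teven_backward_error_spectral {n m : ℕ}
    (A : Fin (m+1) → Matrix (Fin n) (Fin n) ℂ)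
    (hA : A ∈ TevenPoly) (hreg : Regular A)
    (lam : ℂ) (x : Fin n → ℂ) (hx : star x ⬝ᵥ x = 1)
    (r : Fin n → ℂ) (hr : r = -(polyEval A lam *ᵥ x))
    (Px : Matrix (Fin n) (Fin n) ℂ) (hPx : Px = 1 - vecMulVec x (star x))
    (ΔA : Fin (m+1) → Matrix (Fin n) (Fin n) ℂ)
    (hΔ : ∀ j : Fin (m+1),
      ΔA j = if Even (j : ℕ) then
          ((conj (lam ^ (j : ℕ)) * (x ⬝ᵥ r)) / (lamEvenNormSq m lam : ℂ)) •
              vecMulVec (star x) (star x)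
            + (conj (lam ^ (j : ℕ)) / (lamNormSq m lam : ℂ)) •
              (vecMulVec (star x) r * Px + Pxᵀ * vecMulVec r (star x))
            - (conj (lam ^ (j : ℕ)) * conj (x ⬝ᵥ r) /
                ((lamEvenNormSq m lam : ℂ) * ((vecNormSq r - ‖x ⬝ᵥ r‖ ^ 2 : ℝ) : ℂ))) •
              (Pxᵀ * vecMulVec r r * Px)
        else
          (conj (lam ^ (j : ℕ)) / (lamNormSq m lam : ℂ)) •
            (Pxᵀ * vecMulVec r (star x) - vecMulVec (star x) r * Px)) :
    eta polyNorm2 TevenPoly lam x A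
      = Real.sqrt (‖x ⬝ᵥ r‖ ^ 2 / lamEvenNormSq m lam
          + (vecNormSq r - ‖x ⬝ᵥ r‖ ^ 2) / lamNormSq m lam) ∧
    (‖x ⬝ᵥ r‖ < vecNorm r →
      ΔA ∈ TevenPoly ∧
      (polyEval A lam + polyEval ΔA lam) *ᵥ x = 0 ∧
      polyNorm2 ΔA = eta polyNorm2 TevenPoly lam x A) :=
  Teven_backward_error_spectral_general A lam x hx r hr Px hPx ΔA hΔ
end
end
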